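/- Let a, b, c be real with abc ≠ 0, ac > 0, b² − 4ac > 0, (a_n) satisfy c·a_{n+2} + b·a_{n+1} + a·a_n = 0 with a_0·b·(a_1 c + b a_0) > 0 and |a_0 c| > |(a_1 c + b a_0)·α|, where α is the largest-modulus root of a t² + b t + c. Then for all sufficiently large m, every zero z of P_m(z) = ∑_{n=0}^m a_n z^n satisfies |z| ≤ |c|/(|a|·|α|). -/

import Mathlib

/-!
Let `β = c / (a α)` be the other root of `a t² + b t + c`, so that the recurrence reads
`α (β a_{n+2} - a_{n+1}) = β a_{n+1} - a_n`. Hence `β a_{n+1} - a_n = d / αⁿ` with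
`d = β a_1 - a_0`, and the coefficients `a_0 a_n βⁿ` of `a_0 P_m(β w)` have increments
`a_0 d (β / α)ⁿ`. Since `α β = c / a > 0`, the hypothesis on `|a_0 c|` forces `a_0 d > 0`, so these
coefficients are positive and nondecreasing, and the Eneström–Kakeya theorem puts the zeros
of `P_m(β w)` in the closed unit disc, i.e. those of `P_m` in the disc of radius `|β|`.
-/

open Finset

theorem sub_one_mul_sum_range_mul_pow {R : Type*} [CommRing R] (e : ℕ → R) (w : R) (m : ℕ) :
    (w - 1) * ∑ n ∈ range (m + 1), e n * w ^ n
      = e m * w ^ (m + 1) - e 0 - ∑ n ∈ range m, (e (n + 1) - e n) * w ^ (n + 1) := by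
  induction m with
  | zero => simp; ring
  | succ k ih =>
    rw [sum_range_succ (fun n => e n * w ^ n),
      sum_range_succ (fun n => (e (n + 1) - e n) * w ^ (n + 1))]
    linear_combination ih

theorem norm_le_one_of_sum_range_mul_pow_eq_zero {e : ℕ → ℝ} (he0 : 0 < e 0) (he : Monotone e)
    {m : ℕ} {w : ℂ} (hw : ∑ n ∈ range (m + 1), (e n : ℂ) * w ^ n = 0) : ‖w‖ ≤ 1 := by
  by_contra! hgt
  have hem : 0 < e m := he0.trans_le (he (Nat.zero_le m))
  have hAbel := sub_one_mul_sum_range_mul_pow (fun n => (e n : ℂ)) w m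
  rw [hw, mul_zero] at hAbel
  have hincr : ∀ n,
      ‖((e (n + 1) : ℂ) - e n) * w ^ (n + 1)‖ = (e (n + 1) - e n) * ‖w‖ ^ (n + 1) := by
    intro n
    rw [← Complex.ofReal_sub, norm_mul, norm_pow, Complex.norm_real, Real.norm_eq_abs,
      abs_of_nonneg (sub_nonneg.mpr (he n.le_succ))]
  have hlead : e m * ‖w‖ ^ (m + 1) ≤ e m * ‖w‖ ^ m := calc
    e m * ‖w‖ ^ (m + 1) = ‖(e 0 : ℂ) + ∑ n ∈ range m, ((e (n + 1) : ℂ) - e n) * w ^ (n + 1)‖ := by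
        rw [← norm_pow, ← Real.norm_of_nonneg hem.le, ← Complex.norm_real, ← norm_mul]
        congr 1
        linear_combination -hAbel
    _ ≤ e 0 + ∑ n ∈ range m, (e (n + 1) - e n) * ‖w‖ ^ (n + 1) := by
        refine (norm_add_le _ _).trans (add_le_add ?_ ((norm_sum_le _ _).trans_eq ?_))
        · rw [Complex.norm_real, Real.norm_of_nonneg he0.le]
        · exact sum_congr rfl fun n _ => hincr n
    _ ≤ e 0 * ‖w‖ ^ m + ∑ n ∈ range m, (e (n + 1) - e n) * ‖w‖ ^ m := by
        gcongr with n hn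
        · exact le_mul_of_one_le_right he0.le (one_le_pow₀ hgt.le)
        · exact sub_nonneg.mpr (he n.le_succ)
        · exact hgt.le
        · exact mem_range.mp hn
    _ = e m * ‖w‖ ^ m := by
        rw [← sum_mul, sum_range_sub e]
        ring
  exact (le_of_mul_le_mul_left hlead hem).not_gt (pow_lt_pow_right₀ hgt m.lt_succ_self)

theorem norm_le_abs_of_sum_range_mul_pow_eq_zero {p : ℕ → ℝ} {ρ : ℝ} (hρ : ρ ≠ 0) (hp0 : 0 < p 0)
    (hp : Monotone fun n => p n * ρ ^ n) {m : ℕ} {z : ℂ}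
    (hz : ∑ n ∈ range (m + 1), (p n : ℂ) * z ^ n = 0) : ‖z‖ ≤ |ρ| := by
  have hρℂ : (ρ : ℂ) ≠ 0 := Complex.ofReal_ne_zero.mpr hρ
  have hw : ∑ n ∈ range (m + 1), ((p n * ρ ^ n : ℝ) : ℂ) * (z / ρ) ^ n = 0 := by
    rw [← hz]
    refine sum_congr rfl fun n _ => ?_
    rw [Complex.ofReal_mul, Complex.ofReal_pow, div_pow]
    field_simp
  have hw1 := norm_le_one_of_sum_range_mul_pow_eq_zero (by simpa using hp0) hp hw
  rwa [norm_div, Complex.norm_real, Real.norm_eq_abs, div_le_one (abs_pos.mpr hρ)] at hw1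

theorem mul_pos_of_abs_sub_lt_abs {u v : ℝ} (h : |u - v| < |v|) : 0 < u * v := by
  have := sq_lt_sq.mpr h
  nlinarith [sq_nonneg u]

section Recurrence

variable {α β : ℝ} {x : ℕ → ℝ}

theorem sub_eq_div_pow_of_recurrence (hα : α ≠ 0)
    (hrec : ∀ n, α * (β * x (n + 2) - x (n + 1)) = β * x (n + 1) - x n) (n : ℕ) :
    β * x (n + 1) - x n = (β * x 1 - x 0) / α ^ n := by
  induction n with
  | zero => simp
  | succ k ih =>
    rw [pow_succ, ← div_div, ← ih, ← hrec k, mul_div_cancel_left₀ _ hα]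

theorem monotone_mul_mul_pow_of_recurrence (hα : α ≠ 0)
    (hrec : ∀ n, α * (β * x (n + 2) - x (n + 1)) = β * x (n + 1) - x n) (hαβ : 0 < α * β)
    (hd : 0 ≤ x 0 * (β * x 1 - x 0)) : Monotone fun n => x 0 * x n * β ^ n := by
  refine monotone_nat_of_le_succ fun n => sub_nonneg.mp ?_
  have hβα : 0 < β / α := by
    rw [show β / α = α * β / α ^ 2 by field_simp]
    positivity
  calc 0 ≤ x 0 * (β * x 1 - x 0) * (β / α) ^ n := by positivity
    _ = x 0 * β ^ n * ((β * x 1 - x 0) / α ^ n) := by ring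
    _ = x 0 * x (n + 1) * β ^ (n + 1) - x 0 * x n * β ^ n := by
      rw [← sub_eq_div_pow_of_recurrence hα hrec n]
      ring

end Recurrence

theorem zeros_inside_ball_CD_neg_general
    (a b c : ℝ) (hac : 0 < a * c)
    (α : ℝ) (hα : a * α ^ 2 + b * α + c = 0)
    (aseq : ℕ → ℝ)
    (hrec : ∀ n : ℕ, c * aseq (n + 2) + b * aseq (n + 1) + a * aseq n = 0)
    (hmod : |aseq 0 * c| > |(aseq 1 * c + b * aseq 0) * α|) :
    ∃ M : ℕ, ∀ m ≥ M, ∀ z : ℂ,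
      (∑ n ∈ Finset.range (m + 1), (aseq n : ℂ) * z ^ n) = 0 →
      ‖z‖ ≤ |c| / (|a| * |α|) := by
  have ha : a ≠ 0 := left_ne_zero_of_mul hac.ne'
  have hc : c ≠ 0 := right_ne_zero_of_mul hac.ne'
  have hα0 : α ≠ 0 := by
    rintro rfl
    exact hc (by simpa using hα)
  set β := c / (a * α) with hβ
  have hcβ : c = a * α * β := by rw [hβ]; field_simp
  have hbβ : b = -a * (α + β) := mul_left_cancel₀ hα0 (by linear_combination hα - hcβ)
  have hαβ : 0 < α * β := pos_of_mul_pos_right (by rw [hcβ] at hac; nlinarith) (sq_nonneg a)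
  have hrec' : ∀ n, α * (β * aseq (n + 2) - aseq (n + 1)) = β * aseq (n + 1) - aseq n :=
    fun n => mul_left_cancel₀ ha <| by
      linear_combination hrec n - aseq (n + 2) * hcβ - aseq (n + 1) * hbβ
  have hd : 0 < aseq 0 * (β * aseq 1 - aseq 0) := by
    have hlhs : aseq 0 * c = a * α * (β * aseq 0) := by linear_combination aseq 0 * hcβ
    have hrhs :
        (aseq 1 * c + b * aseq 0) * α = a * α * (α * (β * aseq 1 - aseq 0) - β * aseq 0) := by
      linear_combination (aseq 1 * α) * hcβ + (aseq 0 * α) * hbβ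
    rw [hlhs, hrhs, abs_mul (a * α), abs_mul (a * α), gt_iff_lt] at hmod
    have := mul_pos_of_abs_sub_lt_abs (lt_of_mul_lt_mul_left hmod (abs_nonneg _))
    exact pos_of_mul_pos_right (by linarith) hαβ.le
  refine ⟨0, fun m _ z hz => ?_⟩
  have hsum : ∑ n ∈ range (m + 1), ((aseq 0 * aseq n : ℝ) : ℂ) * z ^ n = 0 := by
    simp only [Complex.ofReal_mul, mul_assoc, ← mul_sum, hz, mul_zero]
  rw [← abs_mul, ← abs_div, ← hβ]
  exact norm_le_abs_of_sum_range_mul_pow_eq_zero (right_ne_zero_of_mul hαβ.ne')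
    (mul_self_pos.mpr (left_ne_zero_of_mul hd.ne'))
    (monotone_mul_mul_pow_of_recurrence hα0 hrec' hαβ hd.le) hsum

theorem zeros_inside_ball_CD_neg
    (a b c : ℝ) (habc : a * b * c ≠ 0) (hac : 0 < a * c) (hdisc : b ^ 2 - 4 * a * c > 0)
    (α : ℝ) (hα : a * α ^ 2 + b * α + c = 0)
    (hαmax : ∀ β : ℝ, a * β ^ 2 + b * β + c = 0 → |β| ≤ |α|)
    (aseq : ℕ → ℝ)
    (hrec : ∀ n : ℕ, c * aseq (n + 2) + b * aseq (n + 1) + a * aseq n = 0)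
    (hsign : aseq 0 * b * (aseq 1 * c + b * aseq 0) > 0)
    (hmod : |aseq 0 * c| > |(aseq 1 * c + b * aseq 0) * α|) :
    ∃ M : ℕ, ∀ m ≥ M, ∀ z : ℂ,
      (∑ n ∈ Finset.range (m + 1), (aseq n : ℂ) * z ^ n) = 0 →
      ‖z‖ ≤ |c| / (|a| * |α|) :=
  zeros_inside_ball_CD_neg_general a b c hac α hα aseq hrec hmod
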